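/- For G = G(m,n,k) with trivial centre and x, y₁, y₂ ∈ ℤ_m: C(x, y₁) ⊆ C(x, y₂) if and only if there exists z ∈ ℤ_m with y₁ ≡ y₂·z (mod m), i.e., iff y₁ lies in the ideal generated by y₂ in ℤ_m. -/

import Mathlib

/-!
Since `C(x,y) = {μ(x, yz)}` is the image of the ideal `(y)` under `y ↦ μ(x,y)`, the inclusion
`C(x,y₁) ⊆ C(x,y₂)` amounts to `(y₁) ⊆ (y₂)` once `y ↦ μ(x,y)` is injective. Injectivity is read
off at the element `b`, which `μ(x,y)` sends to `a^{-y(k-1)}`: the condition `gcd(m, k-1) = 1`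
makes `k - 1` a unit of `ℤ_m`, so `y` is recovered.
-/

/-- `n = ind_m(k)`: `n` is the least positive integer with `k^n ≡ 1 (mod m)`. -/
def IsIndex (m k n : ℕ) : Prop :=
  0 < n ∧ k ^ n ≡ 1 [MOD m] ∧ ∀ d : ℕ, 0 < d → k ^ d ≡ 1 [MOD m] → n ≤ d

/-- The mu-map `μ(x,y)` of `G = G(m,n,k)`, acting on elements of `G` written in
the normal form `a^i b^j` (identified with pairs `(i,j) ∈ ℤ_m × ℤ_n`):
`(a^i b^j) μ(x,y) = a^N` with `N ≡ x·i·k^j − y·(k^j − 1) (mod m)`. -/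
def Mu (m n k : ℕ) (x y : ZMod m) : Function.End (ZMod m × ZMod n) :=
  fun p => (x * p.1 * (k : ZMod m) ^ p.2.val -
    y * ((k : ZMod m) ^ p.2.val - 1), 0)

/-- The container `C(x,y) = {μ(x, yz) : z ∈ ℤ_m}`. -/
def Container (m n k : ℕ) (x y : ZMod m) :
    Set (Function.End (ZMod m × ZMod n)) :=
  {f | ∃ z : ZMod m, f = Mu m n k x (y * z)}

lemma ZMod.isUnit_natCast_sub_one {m k : ℕ} (hcop : Nat.gcd m (k - 1) = 1) :
    IsUnit ((k : ZMod m) - 1) := by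
  cases k with
  | zero => simp
  | succ k =>
    simpa using (ZMod.isUnit_iff_coprime k m).mpr (by simpa using hcop : Nat.Coprime m k).symm

lemma IsIndex.natCast_pow_eq_one {m k n : ℕ} (hind : IsIndex m k n) : (k : ZMod m) ^ n = 1 := by
  simpa using (ZMod.natCast_eq_natCast_iff (k ^ n) 1 m).mpr hind.2.1

section Mu

variable {m n k : ℕ}

-- `(1 : ZMod n).val = 1 % n` vanishes for `n = 1`; the exponent only matters modulo `n` anyway.
lemma natCast_pow_val_one (hkn : (k : ZMod m) ^ n = 1) :
    (k : ZMod m) ^ (1 : ZMod n).val = k := by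
  rw [ZMod.val_one_eq_one_mod, ← pow_eq_pow_mod 1 hkn, pow_one]

lemma mu_apply_zero_one (hkn : (k : ZMod m) ^ n = 1) (x y : ZMod m) :
    Mu m n k x y (0, 1) = (-(y * ((k : ZMod m) - 1)), 0) := by
  simp only [Mu, natCast_pow_val_one hkn, mul_zero, zero_mul, zero_sub]

lemma mu_injective (hu : IsUnit ((k : ZMod m) - 1)) (hkn : (k : ZMod m) ^ n = 1) (x : ZMod m) :
    Function.Injective (Mu m n k x) := by
  intro y₁ y₂ h
  have h01 := congrArg Prod.fst (congrFun h (0, 1))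
  simp only [mu_apply_zero_one hkn, neg_inj] at h01
  exact hu.mul_right_cancel h01

lemma mu_mem_container (x y : ZMod m) : Mu m n k x y ∈ Container m n k x y :=
  ⟨1, by rw [mul_one]⟩

lemma container_subset_of_dvd {x y₁ y₂ : ZMod m} (h : y₂ ∣ y₁) :
    Container m n k x y₁ ⊆ Container m n k x y₂ := by
  obtain ⟨z, rfl⟩ := h
  rintro f ⟨w, rfl⟩
  exact ⟨z * w, by rw [mul_assoc]⟩

end Mu

theorem stmt_11_general (m n k : ℕ)
    (hcop : Nat.gcd m (k - 1) = 1) (hind : IsIndex m k n)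
    (x y₁ y₂ : ZMod m) :
    Container m n k x y₁ ⊆ Container m n k x y₂ ↔
      ∃ z : ZMod m, y₁ = y₂ * z := by
  refine ⟨fun hsub => ?_, container_subset_of_dvd⟩
  obtain ⟨z, hz⟩ := hsub (mu_mem_container x y₁)
  exact ⟨z, mu_injective (ZMod.isUnit_natCast_sub_one hcop) hind.natCast_pow_eq_one x hz⟩

/-- `C(x,y₁) ⊆ C(x,y₂)` iff `y₁ = y₂·z` for some `z ∈ ℤ_m`. -/
theorem stmt_11 (m n k : ℕ) (hm : 0 < m) (hk : 0 < k)
    (hcop : Nat.gcd m (k - 1) = 1) (hind : IsIndex m k n)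
    (x y₁ y₂ : ZMod m) :
    Container m n k x y₁ ⊆ Container m n k x y₂ ↔
      ∃ z : ZMod m, y₁ = y₂ * z :=
  stmt_11_general m n k hcop hind x y₁ y₂
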